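/- arXiv:0803.2244 — 3 statements merged into one kernel-verified Lean document; each statement's English description precedes it below -/
import Mathlib

section
/- For α > 0 and ρ → ∞, the derivative u_α'(ρ) = φ_α(ρ)/√(1 − φ_α(ρ)²), with φ_α(ρ) = (cosh ρ − α)/sinh ρ, satisfies lim_{ρ→∞} u_α'(ρ)/e^{ρ/2} = 1/(2√α). -/
theorem deriv_growth (α : ℝ) (hα : 0 < α) :
    Filter.Tendsto
      (fun ρ =>
        (((Real.cosh ρ - α) / Real.sinh ρ) /
          Real.sqrt (1 - ((Real.cosh ρ - α) / Real.sinh ρ) ^ 2)) / Real.exp (ρ / 2))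
      Filter.atTop (nhds (1 / (2 * Real.sqrt α))) := by
  set h : ℝ → ℝ := fun t =>
    (1 + t ^ 2 - 2 * α * t) / (2 * Real.sqrt (α * (1 + t ^ 2) - (α ^ 2 + 1) * t)) with hh
  have hsqα : 0 < Real.sqrt α := Real.sqrt_pos.mpr hα
  have hcont : Filter.Tendsto h (nhds 0) (nhds (1 / (2 * Real.sqrt α))) := by
    have hca : ContinuousAt h 0 := by
      apply ContinuousAt.div
      · fun_prop
      · fun_prop
      · simp
        positivity
    have h0 : h 0 = 1 / (2 * Real.sqrt α) := by simp [hh]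
    simpa [h0] using hca.tendsto
  have hexp : Filter.Tendsto (fun ρ : ℝ => Real.exp (-ρ)) Filter.atTop (nhds 0) :=
    Real.tendsto_exp_neg_atTop_nhds_zero
  refine (hcont.comp hexp).congr' ?_
  filter_upwards [Filter.eventually_gt_atTop 0,
    Filter.eventually_gt_atTop (Real.log ((α ^ 2 + 1) / α))] with ρ hρ hc
  have hsinh : 0 < Real.sinh ρ := Real.sinh_pos_iff.mpr hρ
  have hD : 0 < 2 * α * Real.cosh ρ - α ^ 2 - 1 := by
    have h1 : (α ^ 2 + 1) / α < Real.exp ρ := by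
      exact (Real.log_lt_iff_lt_exp (by positivity)).mp hc
    rw [div_lt_iff₀ hα] at h1
    have h2 : Real.exp ρ / 2 ≤ Real.cosh ρ := by
      rw [Real.cosh_eq]
      have := (Real.exp_pos (-ρ)).le
      linarith
    nlinarith
  have hsqD : 0 < Real.sqrt (2 * α * Real.cosh ρ - α ^ 2 - 1) := Real.sqrt_pos.mpr hD
  have he : 0 < Real.exp ρ := Real.exp_pos ρ
  have key : 1 - ((Real.cosh ρ - α) / Real.sinh ρ) ^ 2
      = (2 * α * Real.cosh ρ - α ^ 2 - 1) / Real.sinh ρ ^ 2 := by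
    have h1 := Real.cosh_sq_sub_sinh_sq ρ
    field_simp
    nlinarith [h1]
  have hsq : Real.sqrt (1 - ((Real.cosh ρ - α) / Real.sinh ρ) ^ 2)
      = Real.sqrt (2 * α * Real.cosh ρ - α ^ 2 - 1) / Real.sinh ρ := by
    rw [key, Real.sqrt_div hD.le, Real.sqrt_sq hsinh.le]
  have hinner : α * (1 + Real.exp (-ρ) ^ 2) - (α ^ 2 + 1) * Real.exp (-ρ)
      = Real.exp (-ρ) * (2 * α * Real.cosh ρ - α ^ 2 - 1) := by
    rw [Real.cosh_eq, Real.exp_neg]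
    field_simp
    ring
  have hnum : 1 + Real.exp (-ρ) ^ 2 - 2 * α * Real.exp (-ρ)
      = 2 * Real.exp (-ρ) * (Real.cosh ρ - α) := by
    rw [Real.cosh_eq, Real.exp_neg]
    field_simp
  have hsqe : Real.sqrt (Real.exp (-ρ)) = Real.exp (-(ρ / 2)) := by
    rw [← Real.exp_half]
    ring_nf
  have hsplit : Real.exp ρ = Real.exp (ρ / 2) * Real.exp (ρ / 2) := by
    rw [← Real.exp_add]; norm_num
  show h (Real.exp (-ρ)) = _
  rw [hh]
  simp only
  rw [hnum, hinner, Real.sqrt_mul (Real.exp_pos _).le, hsqe, hsq, Real.exp_neg ρ,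
    Real.exp_neg (ρ / 2), hsplit]
  field_simp
end

section
/- Let α > 1 and let u_α(ρ) = ∫_{ln α}^{ρ} φ_α(s)/√(1 − φ_α(s)²) ds with φ_α(s) = (cosh s − α)/sinh s, and let u₁(ρ) = 2cosh(ρ/2). Then there exists R > 0 such that u_α(ρ) < u₁(ρ) for all ρ > R. -/
/-!
Since `1 - φ_α² = (2α cosh s - α² - 1) / sinh² s`, the integrand of `u_α` equals
`(cosh s - α) / √(2α cosh s - α² - 1)`, and an elementary estimate bounds it by `e^{s/2} / 2`.
Hence `u_α(ρ) ≤ e^{ρ/2} - √α < e^{ρ/2} < 2 cosh(ρ/2) = u₁(ρ)` for every `ρ > ln α`.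
-/

open Real

lemma two_mul_cosh_sub_one_le_exp {s : ℝ} (hs : 0 ≤ s) : 2 * cosh s - 1 ≤ exp s := by
  have : exp (-s) ≤ 1 := exp_le_one_iff.mpr (neg_nonpos.mpr hs)
  rw [cosh_eq]
  linarith

/-- With `t = c - α`, the two factors on the right are at least `2t + 1` and `2t`. -/
lemma four_mul_sq_sub_le_mul {α c e : ℝ} (hα : 1 ≤ α) (hc : α ≤ c) (he : 2 * c - 1 ≤ e) :
    4 * (c - α) ^ 2 ≤ e * (2 * α * c - α ^ 2 - 1) := by
  have hfirst : 2 * (c - α) + 1 ≤ e := by linarith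
  have hsecond : 2 * (c - α) ≤ 2 * α * c - α ^ 2 - 1 := by nlinarith
  nlinarith [mul_le_mul hfirst hsecond (by linarith) (by linarith)]

lemma one_sub_sq_cosh_sub_div_sinh {s : ℝ} (hs : s ≠ 0) (α : ℝ) :
    1 - ((cosh s - α) / sinh s) ^ 2 = (2 * α * cosh s - α ^ 2 - 1) / sinh s ^ 2 := by
  have hsinh : sinh s ≠ 0 := sinh_ne_zero.mpr hs
  field_simp
  linear_combination -cosh_sq_sub_sinh_sq s

lemma cosh_sub_div_sinh_div_sqrt_eq {s : ℝ} (hs : 0 < s) (α : ℝ) :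
    ((cosh s - α) / sinh s) / √(1 - ((cosh s - α) / sinh s) ^ 2) =
      (cosh s - α) / √(2 * α * cosh s - α ^ 2 - 1) := by
  have hsinh : 0 < sinh s := sinh_pos_iff.mpr hs
  rw [one_sub_sq_cosh_sub_div_sinh hs.ne', sqrt_div' _ (sq_nonneg _), sqrt_sq hsinh.le,
    div_div_div_cancel_right₀ hsinh.ne']

lemma cosh_sub_div_sqrt_le_exp_half {α s : ℝ} (hα : 1 ≤ α) (hs : 0 ≤ s) :
    (cosh s - α) / √(2 * α * cosh s - α ^ 2 - 1) ≤ exp (s / 2) / 2 := by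
  rcases le_or_gt (cosh s) α with hc | hc
  · exact (div_nonpos_of_nonpos_of_nonneg (by linarith) (sqrt_nonneg _)).trans (by positivity)
  have hD : 0 < 2 * α * cosh s - α ^ 2 - 1 := by nlinarith
  rw [div_le_iff₀ (sqrt_pos.mpr hD), exp_half, div_mul_eq_mul_div, ← sqrt_mul (exp_pos s).le,
    le_div_iff₀ two_pos, mul_comm, le_sqrt (by linarith) (by positivity)]
  linarith [four_mul_sq_sub_le_mul hα hc.le (two_mul_cosh_sub_one_le_exp hs)]

lemma integral_half_exp_half (a b : ℝ) :
    ∫ s in a..b, exp (s / 2) / 2 = exp (b / 2) - exp (a / 2) := by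
  rw [intervalIntegral.integral_div, intervalIntegral.integral_comp_div _ two_ne_zero,
    integral_exp]
  ring

lemma integral_le_exp_half_sub_of_le {f : ℝ → ℝ} {a b : ℝ} (hab : a ≤ b)
    (hf : ∀ s ∈ Set.Icc a b, f s ≤ exp (s / 2) / 2) :
    ∫ s in a..b, f s ≤ exp (b / 2) - exp (a / 2) := by
  rw [← integral_half_exp_half]
  by_cases hint : IntervalIntegrable f MeasureTheory.volume a b
  · exact intervalIntegral.integral_mono_on hab hint
      ((by fun_prop : Continuous fun s => exp (s / 2) / 2).intervalIntegrable a b) hf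
  · rw [intervalIntegral.integral_undef hint, integral_half_exp_half, sub_nonneg]
    exact exp_le_exp.mpr (by linarith)

theorem immersed_end_below_S (α : ℝ) (hα : 1 < α) :
    ∃ R : ℝ, 0 < R ∧ ∀ ρ : ℝ, R < ρ →
      (∫ s in Real.log α..ρ,
        ((Real.cosh s - α) / Real.sinh s) /
          Real.sqrt (1 - ((Real.cosh s - α) / Real.sinh s) ^ 2)) <
        2 * Real.cosh (ρ / 2) := by
  have hlog : 0 < log α := log_pos hα
  refine ⟨log α, hlog, fun ρ hρ => ?_⟩
  have hbound : ∀ s ∈ Set.Icc (log α) ρ, ((cosh s - α) / sinh s) /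
      √(1 - ((cosh s - α) / sinh s) ^ 2) ≤ exp (s / 2) / 2 := fun s hs => by
    have hs : 0 < s := hlog.trans_le hs.1
    rw [cosh_sub_div_sinh_div_sqrt_eq hs]
    exact cosh_sub_div_sqrt_le_exp_half hα.le hs.le
  calc _ ≤ exp (ρ / 2) - exp (log α / 2) := integral_le_exp_half_sub_of_le hρ.le hbound
    _ < exp (ρ / 2) + exp (-(ρ / 2)) := by linarith [exp_pos (log α / 2), exp_pos (-(ρ / 2))]
    _ = 2 * cosh (ρ / 2) := by rw [cosh_eq]; ring
end

section
/- For every α > 1 and every ρ > ln α, one has φ_α(ρ)/√(1 − φ_α(ρ)²) < sinh(ρ/2), where φ_α(ρ) = (cosh ρ − α)/sinh ρ. -/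
theorem deriv_comparison (α : ℝ) (hα : 1 < α) (ρ : ℝ) (hρ : Real.log α < ρ) :
    ((Real.cosh ρ - α) / Real.sinh ρ) /
      Real.sqrt (1 - ((Real.cosh ρ - α) / Real.sinh ρ) ^ 2) < Real.sinh (ρ / 2) := by
  have hρ0 : 0 < ρ := lt_of_le_of_lt (Real.log_nonneg hα.le) hρ
  set s := Real.sinh (ρ / 2) with hs_def
  set c := Real.cosh (ρ / 2) with hc_def
  have hs : 0 < s := Real.sinh_pos_iff.mpr (by linarith)
  have hc : 0 < c := Real.cosh_pos _
  have hc2 : c ^ 2 = s ^ 2 + 1 := by rw [hs_def, hc_def, Real.cosh_sq]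
  have hsinh : Real.sinh ρ = 2 * s * c := by
    have h1 := Real.sinh_two_mul (ρ / 2)
    rw [show 2 * (ρ / 2) = ρ by ring] at h1
    linarith [h1]
  have hsinhpos : 0 < Real.sinh ρ := Real.sinh_pos_iff.mpr hρ0
  have hcosh : Real.cosh ρ = 2 * s ^ 2 + 1 := by
    have h1 := Real.cosh_two_mul (ρ / 2)
    rw [show 2 * (ρ / 2) = ρ by ring] at h1
    rw [h1]; nlinarith [hc2]
  set φ := (Real.cosh ρ - α) / Real.sinh ρ with hφ_def
  rcases le_or_gt φ 0 with hφ | hφ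
  · have : φ / Real.sqrt (1 - φ ^ 2) ≤ 0 :=
      div_nonpos_of_nonpos_of_nonneg hφ (Real.sqrt_nonneg _)
    linarith
  · have hφt : φ < s / c := by
      rw [hφ_def, div_lt_div_iff₀ hsinhpos hc, hcosh, hsinh]
      nlinarith
    have h1 : (1 : ℝ) - (s / c) ^ 2 = 1 / c ^ 2 := by
      field_simp
      nlinarith [hc2]
    have h2 : Real.sqrt (1 - (s / c) ^ 2) = 1 / c := by
      rw [h1, show (1 : ℝ) / c ^ 2 = (1 / c) ^ 2 by ring,
        Real.sqrt_sq (by positivity)]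
    have h3 : (s / c) / Real.sqrt (1 - (s / c) ^ 2) = s := by
      rw [h2]; field_simp
    rw [← h3]
    have hsqle : Real.sqrt (1 - (s / c) ^ 2) ≤ Real.sqrt (1 - φ ^ 2) :=
      Real.sqrt_le_sqrt (by nlinarith)
    have hsqpos : 0 < Real.sqrt (1 - φ ^ 2) := by
      rw [h2] at hsqle
      have : 0 < 1 / c := by positivity
      linarith
    exact div_lt_div₀ hφt hsqle (by positivity) (by rw [h2]; positivity)
end
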